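/- Let r ≥ 2, σ ∈ Σ_r, M = M(σ), and let x ≠ y be points in Int(M). Suppose γ₁,…,γ_n are billiard paths from x to y in M that satisfy the non-collinearity condition (NC). Then there exists a billiard path γ from x to y in M which has at least one vertex V that is not a vertex of any of γ₁,…,γ_n. -/

import Mathlib

noncomputable section

open Set

/-- Points of the plane. -/
abbrev Pt : Type := EuclideanSpace ℝ (Fin 2)

/-- Rotation of a plane vector by +90 degrees (counterclockwise). -/
def rot90 (w : Pt) : Pt := (WithLp.equiv 2 (Fin 2 → ℝ)).symm ![-(w 1), w 0]

/-- A simple closed `C^r` curve in the plane with positive curvature, parametrized at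
constant speed by `S¹ = ℝ/ℤ`, oriented counterclockwise.  Positive curvature together with
counterclockwise orientation is encoded by positivity of the cross product `σ' × σ''`. -/
structure ClosedCurve (r : ℕ) where
  toFun : ℝ → Pt
  contDiff : ContDiff ℝ r toFun
  periodic : Function.Periodic toFun 1
  inj : ∀ ⦃s t : ℝ⦄, s ∈ Ico (0:ℝ) 1 → t ∈ Ico (0:ℝ) 1 → toFun s = toFun t → s = t
  constSpeed : ∃ c : ℝ, 0 < c ∧ ∀ s : ℝ, ‖deriv toFun s‖ = c
  posCurv : ∀ s : ℝ, 0 < deriv toFun s 0 * deriv (deriv toFun) s 1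
      - deriv toFun s 1 * deriv (deriv toFun) s 0

namespace ClosedCurve

variable {r : ℕ}

/-- The boundary `∂M(σ)` of the billiard table: the image of the curve. -/
def boundary (σ : ClosedCurve r) : Set Pt := Set.range σ.toFun

/-- The billiard table `M(σ)`: the compact convex region bounded by `σ`. -/
def table (σ : ClosedCurve r) : Set Pt := convexHull ℝ σ.boundary

/-- Unit tangent vector at parameter `s`. -/
def unitTangent (σ : ClosedCurve r) (s : ℝ) : Pt := ‖deriv σ.toFun s‖⁻¹ • deriv σ.toFun s

/-- Inward unit normal at parameter `s` (for a counterclockwise curve). -/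
def inwardNormal (σ : ClosedCurve r) (s : ℝ) : Pt := rot90 (σ.unitTangent s)

/-- Curvature at parameter `s`. -/
def curvatureAt (σ : ClosedCurve r) (s : ℝ) : ℝ :=
  (deriv σ.toFun s 0 * deriv (deriv σ.toFun) s 1
    - deriv σ.toFun s 1 * deriv (deriv σ.toFun) s 0) / ‖deriv σ.toFun s‖ ^ 3

end ClosedCurve

/-- The `C^k` distance `d_k` between two closed curves (given by constant-speed
parametrizations `f`, `g` of period 1): the infimum over basepoint shifts `c` of the
`C^k` distance on `[0,1]` between `t ↦ f (t + c)` and `g`. -/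
def ckDist (k : ℕ) (f g : ℝ → Pt) : ℝ :=
  sInf {d : ℝ | ∃ c : ℝ, d = ⨆ j : Fin (k+1), ⨆ s : Icc (0:ℝ) 1,
    ‖iteratedDeriv (j : ℕ) (fun t => f (t + c)) (s : ℝ) - iteratedDeriv (j : ℕ) g (s : ℝ)‖}

/-- Unit vector pointing from `p` to `q`. -/
def unitDir (p q : Pt) : Pt := ‖q - p‖⁻¹ • (q - p)

/-- Reflection of the vector `w` across the line spanned by `T`. -/
def reflectAcross (T w : Pt) : Pt := (2 * (inner ℝ w T : ℝ) / (inner ℝ T T : ℝ)) • T - w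

/-- A billiard path from `x` to `y` in the table bounded by `σ`: a polygonal path
`x P₁ ⋯ P_m y` whose vertices lie on the boundary, whose segments lie in the table, and
which satisfies the reflection law at each vertex. -/
structure BilliardPath {r : ℕ} (σ : ClosedCurve r) (x y : Pt) where
  m : ℕ
  V : ℕ → Pt
  head_eq : V 0 = x
  last_eq : V (m + 1) = y
  consec_ne : ∀ i ≤ m, V i ≠ V (i + 1)
  vertex_mem : ∀ i, 1 ≤ i → i ≤ m → V i ∈ σ.boundary
  seg_sub : ∀ i ≤ m, segment ℝ (V i) (V (i + 1)) ⊆ σ.table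
  reflect : ∀ i, 1 ≤ i → i ≤ m → ∃ s : ℝ, σ.toFun s = V i ∧
    unitDir (V i) (V (i + 1)) = reflectAcross (deriv σ.toFun s) (unitDir (V (i - 1)) (V i))

namespace BilliardPath

variable {r : ℕ} {σ : ClosedCurve r} {x y : Pt}

/-- The `j`-th segment of a billiard path. -/
def seg (γ : BilliardPath σ x y) (j : ℕ) : Set Pt := segment ℝ (γ.V j) (γ.V (j + 1))

/-- `p` is a vertex of the path `γ`. -/
def IsVertex (γ : BilliardPath σ x y) (p : Pt) : Prop := ∃ i, 1 ≤ i ∧ i ≤ γ.m ∧ γ.V i = p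

end BilliardPath

/-- The `j`-th segment of a polygonal path with vertex sequence `V`. -/
def segOf (V : ℕ → Pt) (j : ℕ) : Set Pt := segment ℝ (V j) (V (j + 1))

/-- `n` polygonal paths from `x` to `y` (the `i`-th having `m i` interior vertices, with
vertex sequence `V i`) are in general position:
(GP1) no two paths share a vertex;
(GP2) no point occurs as a vertex on the same path more than once;
(GP3) no triple intersection points except `x` and `y`;
(GP4) `x` and `y` are not interior points of any of the paths. -/
def GenPos (x y : Pt) {n : ℕ} (m : Fin n → ℕ) (V : Fin n → ℕ → Pt) : Prop :=
  (∀ i j : Fin n, i ≠ j → ∀ a b : ℕ, 1 ≤ a → a ≤ m i → 1 ≤ b → b ≤ m j → V i a ≠ V j b) ∧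
  (∀ i : Fin n, ∀ a b : ℕ, 1 ≤ a → a ≤ m i → 1 ≤ b → b ≤ m i → V i a = V i b → a = b) ∧
  (¬ ∃ z : Pt, z ≠ x ∧ z ≠ y ∧ ∃ i₁ i₂ i₃ : Fin n, ∃ j₁ j₂ j₃ : ℕ,
    j₁ ≤ m i₁ ∧ j₂ ≤ m i₂ ∧ j₃ ≤ m i₃ ∧
    segOf (V i₁) j₁ ≠ segOf (V i₂) j₂ ∧ segOf (V i₁) j₁ ≠ segOf (V i₃) j₃ ∧
    segOf (V i₂) j₂ ≠ segOf (V i₃) j₃ ∧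
    z ∈ segOf (V i₁) j₁ ∧ z ∈ segOf (V i₂) j₂ ∧ z ∈ segOf (V i₃) j₃) ∧
  (∀ i : Fin n, ∀ j ≤ m i, (x ∈ segOf (V i) j → j = 0) ∧ (y ∈ segOf (V i) j → j = m i))

/-- The non-collinearity condition (NC): no two distinct vertices are collinear with `y`. -/
def NonCollinearCond (y : Pt) {n : ℕ} (m : Fin n → ℕ) (V : Fin n → ℕ → Pt) : Prop :=
  ∀ (i₁ i₂ : Fin n) (j₁ j₂ : ℕ), 1 ≤ j₁ → j₁ ≤ m i₁ → 1 ≤ j₂ → j₂ ≤ m i₂ →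
    V i₁ j₁ ≠ V i₂ j₂ → ¬ Collinear ℝ ({V i₁ j₁, V i₂ j₂, y} : Set Pt)

/-- `n` billiard paths are in general position. -/
def InGenPos {r n : ℕ} {σ : ClosedCurve r} {x y : Pt}
    (γ : Fin n → BilliardPath σ x y) : Prop :=
  GenPos x y (fun i => (γ i).m) (fun i => (γ i).V)

/-- Distance between two polygonal paths with `m` interior vertices each. -/
def polyDist (m : ℕ) (V W : ℕ → Pt) : ℝ := ⨆ i : Fin (m + 2), dist (V (i : ℕ)) (W (i : ℕ))

/-- The pair `(x, y)` is secure in the table bounded by `σ`: some finite subset of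
`M(σ) \ {x, y}` meets every billiard path from `x` to `y`. -/
def SecurePair {r : ℕ} (σ : ClosedCurve r) (x y : Pt) : Prop :=
  ∃ B : Finset Pt, (↑B : Set Pt) ⊆ σ.table \ {x, y} ∧
    ∀ γ : BilliardPath σ x y, ∃ p ∈ B, ∃ j ≤ γ.m, p ∈ γ.seg j

/-- A `C^k` family of oriented lines `u ↦ {base u + t • dir u}`, `u ∈ [a, b]`. -/
structure LineFamily (k : ℕ) where
  a : ℝ
  b : ℝ
  lt : a < b
  base : ℝ → Pt
  dir : ℝ → Pt
  smooth_base : ContDiff ℝ k base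
  smooth_dir : ContDiff ℝ k dir
  unit_dir : ∀ u : ℝ, ‖dir u‖ = 1

namespace LineFamily

variable {k : ℕ}

/-- The parameter interval of the family. -/
def I (F : LineFamily k) : Set ℝ := Icc F.a F.b

/-- Non-degeneracy: if `dir' u = 0` then `base' u` is not a scalar multiple of `dir u`. -/
def Nondegenerate (F : LineFamily k) : Prop :=
  ∀ u ∈ F.I, deriv F.dir u = 0 → ∀ c : ℝ, deriv F.base u ≠ c • F.dir u

/-- The family focuses (in linear approximation) at the point `p` at parameter `u₀`. -/
def FocusesAt (F : LineFamily k) (u₀ : ℝ) (p : Pt) : Prop :=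
  deriv F.dir u₀ ≠ 0 ∧
  p = F.base u₀ + (-((inner ℝ (deriv F.base u₀) (deriv F.dir u₀) : ℝ) /
    (inner ℝ (deriv F.dir u₀) (deriv F.dir u₀) : ℝ))) • F.dir u₀

end LineFamily

/-- `G` is the family of oriented lines obtained by reflecting the family `F` from the
curve `σ`: the base point of `G` is the last boundary point hit along each line of `F`,
and the direction is reflected there. -/
def IsReflectionOf {r k : ℕ} (σ : ClosedCurve r) (F G : LineFamily k) : Prop :=
  G.a = F.a ∧ G.b = F.b ∧
  ∀ u ∈ F.I, ∃ t : ℝ,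
    G.base u = F.base u + t • F.dir u ∧
    G.base u ∈ σ.boundary ∧
    (∀ t' : ℝ, F.base u + t' • F.dir u ∈ σ.boundary → t' ≤ t) ∧
    ∃ s : ℝ, σ.toFun s = G.base u ∧
      G.dir u = F.dir u - (2 * (inner ℝ (σ.inwardNormal s) (F.dir u) : ℝ)) • σ.inwardNormal s

/-- The endpoints of the billiard path `τ` (from `p` to `q`, with `τ.m` reflections)
are conjugate along `τ` in the table bounded by `σ`. -/
def ConjugateAlong {r : ℕ} (σ : ClosedCurve r) {p q : Pt} (τ : BilliardPath σ p q) : Prop :=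
  ∃ (F : ℕ → LineFamily 1) (u₀ : ℝ),
    u₀ ∈ (F 0).I ∧ (F 0).Nondegenerate ∧
    (F 0).dir u₀ = unitDir p (τ.V 1) ∧
    (∃ t : ℝ, (F 0).base u₀ = p + t • unitDir p (τ.V 1)) ∧
    (∀ i < τ.m, IsReflectionOf σ (F i) (F (i + 1))) ∧
    (F 0).FocusesAt u₀ p ∧ (F τ.m).FocusesAt u₀ q

/-- The `C^k` distance `d_k` between two parametrized families of lines on `[a,b]`. -/
def famCkDist (k : ℕ) (a b : ℝ) (f g f' g' : ℝ → Pt) : ℝ :=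
  max (⨆ j : Fin (k+1), ⨆ s : Icc a b,
        ‖iteratedDeriv (j : ℕ) f (s : ℝ) - iteratedDeriv (j : ℕ) f' (s : ℝ)‖)
      (⨆ j : Fin (k+1), ⨆ s : Icc a b,
        ‖iteratedDeriv (j : ℕ) g (s : ℝ) - iteratedDeriv (j : ℕ) g' (s : ℝ)‖)

/-- `U` is an open subset of `S` in the `C^k` topology induced by the metric `d_k`. -/
def OpenIn {r : ℕ} (k : ℕ) (S U : Set (ClosedCurve r)) : Prop :=
  U ⊆ S ∧ ∀ σ ∈ U, ∃ ε > 0, ∀ τ ∈ S, ckDist k σ.toFun τ.toFun < ε → τ ∈ U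

/-- `U` is a dense subset of `S` in the `C^k` topology induced by the metric `d_k`. -/
def DenseIn {r : ℕ} (k : ℕ) (S U : Set (ClosedCurve r)) : Prop :=
  ∀ σ ∈ S, ∀ ε > 0, ∃ τ ∈ U, ckDist k σ.toFun τ.toFun < ε

/-- `A` is a dense `G_δ` subset of `S` in the `C^k` topology: a dense countable
intersection of open dense subsets of `S`. -/
def DenseGdeltaIn {r : ℕ} (k : ℕ) (S A : Set (ClosedCurve r)) : Prop :=
  (∃ U : ℕ → Set (ClosedCurve r), (∀ i, OpenIn k S (U i) ∧ DenseIn k S (U i)) ∧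
    A = ⋂ i, U i) ∧ DenseIn k S A

/-- `C¹` distance between maps on a compact set `K ⊆ ℝ²`. -/
def c1DistOn (K : Set Pt) (f g : Pt → Pt) : ℝ :=
  max (⨆ s : K, ‖f (s : Pt) - g (s : Pt)‖)
      (⨆ s : K, ‖fderivWithin ℝ f K (s : Pt) - fderivWithin ℝ g K (s : Pt)‖)



/-! Suppose every billiard path from `x` to `y` had all its vertices among the finitely many
vertices of the `γ i`. For each `m`, a longest polygon `x P₁ ⋯ P_m y` with all `Pᵢ ∈ ∂M` is a
billiard path: no vertex lies between its neighbours since `M` has interior points, and Fermat's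
rule at each vertex is the reflection law. Each `Pᵢ` is also the last boundary point on the ray
from `Pᵢ₋₁` through it, so a longest polygon is determined by its first vertex. By pigeonhole,
longest polygons with `m < m'` vertices share their first vertex, hence their first `m` vertices;
then `P_m y` and `P_m P'_{m+1}` leave `P_m` in the same direction, so `P_m`, `P'_{m+1}` and `y`
are collinear, against (NC). -/

open Function Filter

local notation "⟪" a ", " b "⟫" => (inner ℝ a b : ℝ)

lemma exists_eq_smul_of_inner_eq_zero {E : Type*} [NormedAddCommGroup E]
    [InnerProductSpace ℝ E] (hE : Module.finrank ℝ E = 2) {w T v : E} (hw : w ≠ 0)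
    (hT : T ≠ 0) (hTw : ⟪T, w⟫ = 0) (hvw : ⟪v, w⟫ = 0) : ∃ c : ℝ, v = c • T := by
  have : Fact (Module.finrank ℝ E = 1 + 1) := ⟨hE⟩
  set K := (ℝ ∙ w)ᗮ
  have hTK : T ∈ K := Submodule.mem_orthogonal_singleton_iff_inner_left.2 hTw
  have hvK : v ∈ K := Submodule.mem_orthogonal_singleton_iff_inner_left.2 hvw
  obtain ⟨c, hc⟩ := (finrank_eq_one_iff_of_nonzero' (⟨T, hTK⟩ : K) (by simpa using hT)).1
    (Submodule.finrank_orthogonal_span_singleton hw) ⟨v, hvK⟩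
  exact ⟨c, congrArg Subtype.val hc.symm⟩

lemma reflectAcross_eq_of_inner_sub_eq_zero {T a b : Pt} (hT : T ≠ 0) (hab : a ≠ b)
    (hnorm : ‖a‖ = ‖b‖) (h : ⟪a - b, T⟫ = 0) : reflectAcross T a = b := by
  -- `a + b` and `T` are both orthogonal to `a - b ≠ 0`, hence parallel in the plane.
  obtain ⟨c, hc⟩ := exists_eq_smul_of_inner_eq_zero finrank_euclideanSpace_fin
    (sub_ne_zero.2 hab) hT (by rwa [real_inner_comm])
    ((real_inner_add_sub_eq_zero_iff a b).2 hnorm)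
  have hTT : ⟪T, T⟫ ≠ 0 := inner_self_ne_zero.2 hT
  have hcoeff : 2 * ⟪a, T⟫ / ⟪T, T⟫ = c := by
    have hsum : ⟪a + b, T⟫ = c * ⟪T, T⟫ := by rw [hc, real_inner_smul_left]
    rw [inner_add_left] at hsum
    rw [inner_sub_left] at h
    field_simp
    linarith
  rw [reflectAcross, hcoeff, ← hc, add_sub_cancel_left]

lemma norm_unitDir {p q : Pt} (h : p ≠ q) : ‖unitDir p q‖ = 1 := by
  rw [unitDir, norm_smul, norm_inv, norm_norm,
    inv_mul_cancel₀ (norm_ne_zero_iff.2 (sub_ne_zero.2 h.symm))]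

lemma unitDir_swap (p q : Pt) : unitDir q p = -unitDir p q := by
  rw [unitDir, unitDir, norm_sub_rev, ← smul_neg, neg_sub]

lemma sameRay_of_unitDir_eq {a b c d : Pt} (hab : a ≠ b) (hcd : c ≠ d)
    (h : unitDir a b = unitDir c d) : SameRay ℝ (b - a) (d - c) :=
  (sameRay_iff_inv_norm_smul_eq_of_ne (sub_ne_zero.2 hab.symm) (sub_ne_zero.2 hcd.symm)).2 h

lemma HasDerivAt.const_dist {f : ℝ → Pt} {f' c : Pt} {s : ℝ} (hf : HasDerivAt f f' s)
    (h : f s ≠ c) : HasDerivAt (fun u => dist c (f u)) ⟪unitDir c (f s), f'⟫ s := by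
  have hne : ‖f s - c‖ ≠ 0 := norm_ne_zero_iff.2 (sub_ne_zero.2 h)
  have hsq := ((hf.sub_const c).norm_sq).sqrt (pow_ne_zero 2 hne)
  convert hsq using 1
  · funext u
    rw [Real.sqrt_sq (norm_nonneg _), dist_comm, dist_eq_norm]
  · rw [unitDir, real_inner_smul_left, Real.sqrt_sq (norm_nonneg _)]
    field_simp

namespace ClosedCurve

variable {r : ℕ} (σ : ClosedCurve r)

lemma isCompact_boundary : IsCompact σ.boundary :=
  σ.periodic.compact_of_continuous one_ne_zero σ.contDiff.continuous

lemma periodic_deriv : Periodic (deriv σ.toFun) 1 := fun t => by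
  rw [← deriv_comp_add_const, funext σ.periodic]

lemma deriv_eq_of_eq {s t : ℝ} (h : σ.toFun s = σ.toFun t) :
    deriv σ.toFun s = deriv σ.toFun t := by
  have hfract : ∀ {f : ℝ → Pt}, Periodic f 1 → ∀ u, f (Int.fract u) = f u := fun hf u => by
    rw [← Int.self_sub_floor, ← mul_one (⌊u⌋ : ℝ)]
    exact hf.sub_int_mul_eq ⌊u⌋
  have : Int.fract s = Int.fract t :=
    σ.inj ⟨Int.fract_nonneg s, Int.fract_lt_one s⟩ ⟨Int.fract_nonneg t, Int.fract_lt_one t⟩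
      (by rw [hfract σ.periodic, hfract σ.periodic, h])
  rw [← hfract σ.periodic_deriv s, this, hfract σ.periodic_deriv]

lemma deriv_ne_zero (s : ℝ) : deriv σ.toFun s ≠ 0 := by
  obtain ⟨c, hc, hnorm⟩ := σ.constSpeed
  exact norm_ne_zero_iff.1 ((hnorm s).trans_ne hc.ne')

lemma exists_mem_boundary_not_wbtw (hM : (interior σ.table).Nonempty) (A B : Pt) :
    ∃ Q ∈ σ.boundary, ¬ Wbtw ℝ A Q B := by
  by_contra! h
  have hsub : σ.table ⊆ convexHull ℝ {A, B} := by
    rw [convexHull_pair]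
    exact convexHull_min (fun Q hQ => mem_segment_iff_wbtw.2 (h Q hQ)) (convex_segment A B)
  have htop := interior_convexHull_nonempty_iff_affineSpan_eq_top.1
    (hM.mono (interior_mono hsub))
  have hcol : Module.finrank ℝ (vectorSpan ℝ ({A, B} : Set Pt)) ≤ 1 :=
    (collinear_iff_finrank_le_one).1 (collinear_pair ℝ A B)
  rw [← direction_affineSpan, htop, AffineSubspace.direction_top, finrank_top,
    finrank_euclideanSpace_fin] at hcol
  omega

end ClosedCurve

/-- Polygons `x P₁ ⋯ P_m y` with `Pᵢ ∈ ∂M`, encoded as sequences that stay at `y` after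
index `m + 1`, so that they form a compact subset of `ℕ → Pt`. -/
def inscribedPolygons {r : ℕ} (σ : ClosedCurve r) (x y : Pt) (m : ℕ) : Set (ℕ → Pt) :=
  univ.pi fun i => if i = 0 then {x} else if i ≤ m then σ.boundary else {y}

def polygonLength (m : ℕ) (V : ℕ → Pt) : ℝ :=
  ∑ i ∈ Finset.range (m + 1), dist (V i) (V (i + 1))

def IsLongestPolygon {r : ℕ} (σ : ClosedCurve r) (x y : Pt) (m : ℕ) (V : ℕ → Pt) : Prop :=
  V ∈ inscribedPolygons σ x y m ∧ IsMaxOn (polygonLength m) (inscribedPolygons σ x y m) V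

section Polygons

variable {r : ℕ} {σ : ClosedCurve r} {x y : Pt} {m : ℕ} {V : ℕ → Pt}

lemma mem_inscribedPolygons : V ∈ inscribedPolygons σ x y m ↔
    V 0 = x ∧ (∀ i, 1 ≤ i → i ≤ m → V i ∈ σ.boundary) ∧ ∀ i, m < i → V i = y := by
  simp only [inscribedPolygons, mem_univ_pi]
  constructor
  · intro h
    refine ⟨by simpa using h 0, fun i h1 h2 => ?_, fun i hi => ?_⟩
    · simpa [show i ≠ 0 by omega, h2] using h i
    · simpa [show i ≠ 0 by omega, show ¬ i ≤ m by omega] using h i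
  · rintro ⟨h0, hb, hy⟩ i
    split_ifs with h1 h2
    · subst h1; exact h0
    · exact hb i (by omega) h2
    · exact hy i (by omega)

lemma update_mem_inscribedPolygons (hV : V ∈ inscribedPolygons σ x y m) {i : ℕ}
    (hi1 : 1 ≤ i) (hi2 : i ≤ m) {z : Pt} (hz : z ∈ σ.boundary) :
    update V i z ∈ inscribedPolygons σ x y m := by
  obtain ⟨h0, hb, hy⟩ := mem_inscribedPolygons.1 hV
  refine mem_inscribedPolygons.2 ⟨?_, fun j h1 h2 => ?_, fun j hj => ?_⟩
  · rwa [update_of_ne (by omega)]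
  · rcases eq_or_ne j i with rfl | hj
    · rwa [update_self]
    · rw [update_of_ne hj]; exact hb j h1 h2
  · rw [update_of_ne (by omega)]; exact hy j hj

lemma polygonLength_update_sub (V : ℕ → Pt) {i : ℕ} (hi1 : 1 ≤ i) (hi2 : i ≤ m) (z : Pt) :
    polygonLength m (update V i z) - polygonLength m V =
      dist (V (i - 1)) z + dist z (V (i + 1)) -
        (dist (V (i - 1)) (V i) + dist (V i) (V (i + 1))) := by
  obtain ⟨j, rfl⟩ : ∃ j, i = j + 1 := ⟨i - 1, by omega⟩
  rw [polygonLength, polygonLength, ← Finset.sum_sub_distrib,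
    Finset.sum_eq_add_of_mem j (j + 1) (by simp; omega) (by simp; omega) (by omega)]
  · simp only [update_self, update_of_ne, ne_eq, Nat.left_eq_add, Nat.add_eq_left, one_ne_zero,
      not_false_eq_true, add_tsub_cancel_right]
    ring
  · intro k _ hk
    rw [update_of_ne (by omega), update_of_ne (by omega), sub_self]

lemma exists_isLongestPolygon (σ : ClosedCurve r) (x y : Pt) (m : ℕ) :
    ∃ V, IsLongestPolygon σ x y m V := by
  have hcompact : IsCompact (inscribedPolygons σ x y m) := isCompact_univ_pi fun i => by
    split_ifs
    exacts [isCompact_singleton, σ.isCompact_boundary, isCompact_singleton]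
  have hne : (inscribedPolygons σ x y m).Nonempty :=
    ⟨fun i => if i = 0 then x else if i ≤ m then σ.toFun 0 else y, fun i _ => by
      dsimp only
      split_ifs <;> simp [ClosedCurve.boundary]⟩
  have hcont : Continuous (polygonLength m) := by
    unfold polygonLength
    fun_prop
  exact hcompact.exists_isMaxOn hne hcont.continuousOn

end Polygons

namespace IsLongestPolygon

variable {r : ℕ} {σ : ClosedCurve r} {x y : Pt} {m m' i : ℕ} {V W : ℕ → Pt}

lemma head (hV : IsLongestPolygon σ x y m V) : V 0 = x :=
  (mem_inscribedPolygons.1 hV.1).1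

lemma mem_boundary (hV : IsLongestPolygon σ x y m V) (hi1 : 1 ≤ i) (hi2 : i ≤ m) :
    V i ∈ σ.boundary :=
  (mem_inscribedPolygons.1 hV.1).2.1 i hi1 hi2

lemma last (hV : IsLongestPolygon σ x y m V) : V (m + 1) = y :=
  (mem_inscribedPolygons.1 hV.1).2.2 (m + 1) (by omega)

lemma dist_add_dist_le (hV : IsLongestPolygon σ x y m V) (hi1 : 1 ≤ i) (hi2 : i ≤ m)
    {z : Pt} (hz : z ∈ σ.boundary) :
    dist (V (i - 1)) z + dist z (V (i + 1)) ≤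
      dist (V (i - 1)) (V i) + dist (V i) (V (i + 1)) := by
  have hle : polygonLength m (update V i z) ≤ polygonLength m V :=
    hV.2 (update_mem_inscribedPolygons hV.1 hi1 hi2 hz)
  have := polygonLength_update_sub V hi1 hi2 z
  linarith

lemma not_wbtw (hV : IsLongestPolygon σ x y m V) (hM : (interior σ.table).Nonempty)
    (hi1 : 1 ≤ i) (hi2 : i ≤ m) : ¬ Wbtw ℝ (V (i - 1)) (V i) (V (i + 1)) := by
  intro hW
  obtain ⟨Q, hQ, hQW⟩ := σ.exists_mem_boundary_not_wbtw hM (V (i - 1)) (V (i + 1))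
  have hlt : dist (V (i - 1)) (V (i + 1)) < dist (V (i - 1)) Q + dist Q (V (i + 1)) :=
    (dist_triangle _ _ _).lt_of_ne fun h => hQW (dist_add_dist_eq_iff.1 h.symm)
  linarith [hV.dist_add_dist_le hi1 hi2 hQ, dist_add_dist_eq_iff.2 hW]

lemma pred_ne (hV : IsLongestPolygon σ x y m V) (hM : (interior σ.table).Nonempty)
    (hi1 : 1 ≤ i) (hi2 : i ≤ m) : V (i - 1) ≠ V i := fun h =>
  hV.not_wbtw hM hi1 hi2 (h ▸ wbtw_self_left ℝ _ _)

lemma ne_succ (hV : IsLongestPolygon σ x y m V) (hxy : x ≠ y)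
    (hM : (interior σ.table).Nonempty) (hi : i ≤ m) : V i ≠ V (i + 1) := by
  rcases Nat.eq_zero_or_pos i with rfl | hi1
  · rcases Nat.eq_zero_or_pos m with rfl | hm
    · rwa [hV.head, hV.last]
    · exact hV.pred_ne hM le_rfl hm
  · exact fun h => hV.not_wbtw hM hi1 hi (h ▸ wbtw_self_right ℝ _ _)

/-- Fermat's rule at the parameter of `V i`: the incoming and outgoing unit directions have the
same tangential component. -/
lemma reflect (hV : IsLongestPolygon σ x y m V) (hdiff : Differentiable ℝ σ.toFun)
    (hxy : x ≠ y) (hM : (interior σ.table).Nonempty) (hi1 : 1 ≤ i) (hi2 : i ≤ m) :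
    ∃ s : ℝ, σ.toFun s = V i ∧
      unitDir (V i) (V (i + 1)) =
        reflectAcross (deriv σ.toFun s) (unitDir (V (i - 1)) (V i)) := by
  obtain ⟨s, hs⟩ := hV.mem_boundary hi1 hi2
  have hA := hV.pred_ne hM hi1 hi2
  have hB := hV.ne_succ hxy hM hi2
  have hmax :
      IsLocalMax (fun u => dist (V (i - 1)) (σ.toFun u) + dist (V (i + 1)) (σ.toFun u)) s :=
    (isMaxOn_univ_iff.2 fun u => by
      simpa only [hs, dist_comm (V (i + 1))] using
        hV.dist_add_dist_le hi1 hi2 ⟨u, rfl⟩).isLocalMax univ_mem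
  have hT := (hdiff s).hasDerivAt
  have hzero := hmax.hasDerivAt_eq_zero
    ((hT.const_dist (hs ▸ hA.symm)).add (hT.const_dist (hs ▸ hB)))
  rw [hs, unitDir_swap (V i) (V (i + 1)), inner_neg_left] at hzero
  refine ⟨s, hs, (reflectAcross_eq_of_inner_sub_eq_zero (σ.deriv_ne_zero s) (fun h => ?_)
    (by rw [norm_unitDir hA, norm_unitDir hB]) (by rw [inner_sub_left]; linarith)).symm⟩
  exact hV.not_wbtw hM hi1 hi2 (wbtw_iff_sameRay_vsub.2 (sameRay_of_unitDir_eq hA hB h))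

lemma not_sbtw (hV : IsLongestPolygon σ x y m V) (hM : (interior σ.table).Nonempty)
    (hi1 : 1 ≤ i) (hi2 : i ≤ m) {z : Pt} (hz : z ∈ σ.boundary) :
    ¬ Sbtw ℝ (V (i - 1)) (V i) z := by
  rintro ⟨hW, -, hne⟩
  have hle : dist (V i) z + dist z (V (i + 1)) ≤ dist (V i) (V (i + 1)) := by
    linarith [hV.dist_add_dist_le hi1 hi2 hz, dist_add_dist_eq_iff.2 hW]
  have hW' : Wbtw ℝ (V i) z (V (i + 1)) :=
    dist_add_dist_eq_iff.1 (hle.antisymm (dist_triangle _ _ _))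
  exact hV.not_wbtw hM hi1 hi2 (hW.trans_expand_left hW' hne)

lemma eq_of_unitDir_eq (hV : IsLongestPolygon σ x y m V) (hW : IsLongestPolygon σ x y m' W)
    (hM : (interior σ.table).Nonempty) (hi1 : 1 ≤ i) (hi : i ≤ m) (hi' : i ≤ m')
    (h₀ : V (i - 1) = W (i - 1))
    (hdir : unitDir (V (i - 1)) (V i) = unitDir (W (i - 1)) (W i)) : V i = W i := by
  have hVi := hV.pred_ne hM hi1 hi
  have hWi := hW.pred_ne hM hi1 hi'
  have hnotV := hV.not_sbtw hM hi1 hi (hW.mem_boundary hi1 hi')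
  have hnotW := hW.not_sbtw hM hi1 hi' (hV.mem_boundary hi1 hi)
  rw [h₀] at hVi hdir hnotV
  by_contra hne
  rcases wbtw_total_of_sameRay_vsub_left (x := W (i - 1))
    (sameRay_of_unitDir_eq hVi hWi hdir) with h | h
  · exact hnotV ⟨h, hVi.symm, hne⟩
  · exact hnotW ⟨h, hWi.symm, Ne.symm hne⟩

lemma unitDir_succ_eq (hV : IsLongestPolygon σ x y m V) (hW : IsLongestPolygon σ x y m' W)
    (hdiff : Differentiable ℝ σ.toFun) (hxy : x ≠ y) (hM : (interior σ.table).Nonempty)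
    (hi1 : 1 ≤ i) (hi : i ≤ m) (hi' : i ≤ m') (h₀ : V (i - 1) = W (i - 1)) (h₁ : V i = W i) :
    unitDir (V i) (V (i + 1)) = unitDir (W i) (W (i + 1)) := by
  obtain ⟨s, hs, hVs⟩ := hV.reflect hdiff hxy hM hi1 hi
  obtain ⟨s', hs', hWs'⟩ := hW.reflect hdiff hxy hM hi1 hi'
  rw [hVs, hWs', σ.deriv_eq_of_eq (hs.trans (h₁.trans hs'.symm)), h₀, h₁]

lemma apply_eq_of_apply_one_eq (hV : IsLongestPolygon σ x y m V)
    (hW : IsLongestPolygon σ x y m' W)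
    (hdiff : Differentiable ℝ σ.toFun) (hxy : x ≠ y) (hM : (interior σ.table).Nonempty)
    (hmm' : m ≤ m') (h₁ : V 1 = W 1) (hi : i ≤ m) : V i = W i := by
  suffices ∀ i, 1 ≤ i → i ≤ m → V (i - 1) = W (i - 1) ∧ V i = W i by
    rcases Nat.eq_zero_or_pos i with rfl | hi1
    · rw [hV.head, hW.head]
    · exact (this i hi1 hi).2
  intro i hi1
  induction i, hi1 using Nat.le_induction with
  | base => exact fun _ => ⟨hV.head.trans hW.head.symm, h₁⟩
  | succ i hi1 ih =>
    intro hi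
    obtain ⟨h₀, h₁⟩ := ih (by omega)
    refine ⟨h₁, hV.eq_of_unitDir_eq hW hM (by omega) hi (by omega) h₁ ?_⟩
    exact hV.unitDir_succ_eq hW hdiff hxy hM hi1 (by omega) (by omega) h₀ h₁

lemma collinear_of_apply_one_eq (hV : IsLongestPolygon σ x y m V)
    (hW : IsLongestPolygon σ x y m' W)
    (hdiff : Differentiable ℝ σ.toFun) (hxy : x ≠ y) (hM : (interior σ.table).Nonempty)
    (hm : 1 ≤ m) (hmm' : m < m') (h₁ : V 1 = W 1) :
    V m ≠ W (m + 1) ∧ Collinear ℝ ({V m, W (m + 1), y} : Set Pt) := by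
  have hVW i (hi : i ≤ m) : V i = W i := hV.apply_eq_of_apply_one_eq hW hdiff hxy hM hmm'.le h₁ hi
  have hdir := hV.unitDir_succ_eq hW hdiff hxy hM hm le_rfl hmm'.le
    (hVW (m - 1) (by omega)) (hVW m le_rfl)
  have hy : V m ≠ y := hV.last ▸ hV.ne_succ hxy hM le_rfl
  have hW' : V m ≠ W (m + 1) := hVW m le_rfl ▸ hW.ne_succ hxy hM hmm'.le
  rw [hV.last, ← hVW m le_rfl] at hdir
  refine ⟨hW', ?_⟩
  rcases wbtw_total_of_sameRay_vsub_left (x := V m)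
    (sameRay_of_unitDir_eq hy hW' hdir) with h | h
  · rw [pair_comm]; exact h.collinear
  · exact h.collinear

lemma mem_table (hV : IsLongestPolygon σ x y m V) (hx : x ∈ σ.table) (hy : y ∈ σ.table)
    (i : ℕ) : V i ∈ σ.table := by
  rcases Nat.eq_zero_or_pos i with rfl | hi1
  · rwa [hV.head]
  rcases le_or_gt i m with hi | hi
  · exact subset_convexHull ℝ _ (hV.mem_boundary hi1 hi)
  · rwa [(mem_inscribedPolygons.1 hV.1).2.2 i hi]

def toBilliardPath (hV : IsLongestPolygon σ x y m V) (hdiff : Differentiable ℝ σ.toFun)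
    (hxy : x ≠ y) (hM : (interior σ.table).Nonempty) (hx : x ∈ σ.table) (hy : y ∈ σ.table) :
    BilliardPath σ x y where
  m := m
  V := V
  head_eq := hV.head
  last_eq := hV.last
  consec_ne _ := hV.ne_succ hxy hM
  vertex_mem _ := hV.mem_boundary
  seg_sub i _ := (convex_convexHull ℝ _).segment_subset (hV.mem_table hx hy i)
    (hV.mem_table hx hy (i + 1))
  reflect _ := hV.reflect hdiff hxy hM

end IsLongestPolygon

lemma BilliardPath.finite_setOf_isVertex {r : ℕ} {σ : ClosedCurve r} {x y : Pt}
    (γ : BilliardPath σ x y) : {p | γ.IsVertex p}.Finite :=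
  ((finite_Icc 1 γ.m).image γ.V).subset fun _ ⟨i, h1, h2, hi⟩ => ⟨i, ⟨h1, h2⟩, hi⟩

lemma NonCollinearCond.not_collinear {r n : ℕ} {σ : ClosedCurve r} {x y : Pt}
    {γ : Fin n → BilliardPath σ x y}
    (hNC : NonCollinearCond y (fun i => (γ i).m) (fun i => (γ i).V)) {P Q : Pt}
    (hP : ∃ i, (γ i).IsVertex P) (hQ : ∃ i, (γ i).IsVertex Q) (hPQ : P ≠ Q) :
    ¬ Collinear ℝ ({P, Q, y} : Set Pt) := by
  obtain ⟨i, j, hj1, hj2, rfl⟩ := hP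
  obtain ⟨i', j', hj1', hj2', rfl⟩ := hQ
  exact hNC i i' j j' hj1 hj2 hj1' hj2' hPQ

/-- new vertex lemma. If billiard paths `γ₁, …, γ_n` from `x` to `y`
satisfy the non-collinearity condition, then there is a billiard path from `x` to `y`
having a vertex which is not a vertex of any of `γ₁, …, γ_n`. -/
theorem exists_new_vertex
    (r : ℕ) (hr : 2 ≤ r) (σ : ClosedCurve r) (x y : Pt) (hxy : x ≠ y)
    (hx : x ∈ interior σ.table) (hy : y ∈ interior σ.table)
    (n : ℕ) (γ : Fin n → BilliardPath σ x y)
    (hNC : NonCollinearCond y (fun i => (γ i).m) (fun i => (γ i).V)) :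
    ∃ δ : BilliardPath σ x y, ∃ k : ℕ, 1 ≤ k ∧ k ≤ δ.m ∧
      ∀ i : Fin n, ¬ (γ i).IsVertex (δ.V k) := by
  by_contra! hold
  have hdiff : Differentiable ℝ σ.toFun :=
    σ.contDiff.differentiable (by exact_mod_cast (by omega : r ≠ 0))
  have hM : (interior σ.table).Nonempty := ⟨x, hx⟩
  choose V hV using fun m => exists_isLongestPolygon σ x y (m + 1)
  have hvert m k (hk1 : 1 ≤ k) (hk2 : k ≤ m + 1) : V m k ∈ {p | ∃ i, (γ i).IsVertex p} :=
    hold ((hV m).toBilliardPath hdiff hxy hM (interior_subset hx) (interior_subset hy)) k hk1 hk2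
  have hfin : {p | ∃ i, (γ i).IsVertex p}.Finite := by
    rw [ofPred_exists]
    exact finite_iUnion fun i => (γ i).finite_setOf_isVertex
  obtain ⟨a, b, hab, h₁⟩ :=
    hfin.exists_lt_map_eq_of_forall_mem fun m => hvert m 1 le_rfl (by omega)
  obtain ⟨hne, hcol⟩ :=
    (hV a).collinear_of_apply_one_eq (hV b) hdiff hxy hM (by omega) (by omega) h₁
  exact hNC.not_collinear (hvert a (a + 1) (by omega) le_rfl) (hvert b (a + 2) (by omega)
    (by omega)) hne hcol

end
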